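/- For each j ≥ 1 and b_j = √(2j), the quasi-polynomials degenerate linearly: b_j · ĥ_j(x; b_j) + j · ĥ_{j-1}(x; b_j) = 0 identically in x. -/

import Mathlib

/-- Monic Hermite polynomials. -/
noncomputable def hermiteMonic (n : ℕ) : Polynomial ℝ :=
  ∑ j ∈ Finset.range (n / 2 + 1),
    Polynomial.C ((n.factorial : ℝ) / ((n - 2 * j).factorial * j.factorial) * (-(1:ℝ)/4) ^ j) *
      Polynomial.X ^ (n - 2 * j)

/-- The quasi-polynomial ĥ_n(x;b). -/
noncomputable def hhat (b : ℝ) (n : ℕ) (x : ℝ) : ℝ :=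
  (b ^ 2 - 2 * n) * (hermiteMonic n).eval x
    - (b * (hermiteMonic n).eval x + n * (hermiteMonic (n - 1)).eval x) / (x + b)

/-! With `b² = 2j` the polynomial part `(b² - 2j) h_j` of `ĥ_j` vanishes and `(b² - 2(j-1)) h_{j-1}`
becomes `2 h_{j-1}`; clearing the denominator `x + b` then turns `b ĥ_j + j ĥ_{j-1}` into
`-2j (h_j - x h_{j-1} + (j-1)/2 h_{j-2})`, which is the three-term recurrence of the monic Hermite
polynomials. That recurrence is checked coefficientwise on the explicit formula. -/

open Polynomial Nat

noncomputable def hermiteMonicCoeff (k i : ℕ) : ℝ :=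
  (k + 2 * i)! / (k ! * i !) * (-1 / 4) ^ i

lemma hermiteMonicCoeff_zero_succ (i : ℕ) :
    hermiteMonicCoeff 0 (i + 1) = -((2 * i + 1) / 2) * hermiteMonicCoeff 0 i := by
  simp only [hermiteMonicCoeff, zero_add, show 2 * (i + 1) = 2 * i + 1 + 1 by ring, factorial_succ]
  push_cast
  field_simp
  ring

lemma hermiteMonicCoeff_succ_succ (k i : ℕ) :
    hermiteMonicCoeff (k + 1) (i + 1) =
      hermiteMonicCoeff k (i + 1) - (k + 2 * i + 2) / 2 * hermiteMonicCoeff (k + 1) i := by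
  simp only [hermiteMonicCoeff, show k + 1 + 2 * (i + 1) = k + 2 * i + 1 + 1 + 1 by ring,
    show k + 2 * (i + 1) = k + 2 * i + 1 + 1 by ring, show k + 1 + 2 * i = k + 2 * i + 1 by ring,
    factorial_succ]
  push_cast
  field_simp
  ring

lemma coeff_hermiteMonic_add_two_mul (k i : ℕ) :
    (hermiteMonic (k + 2 * i)).coeff k = hermiteMonicCoeff k i := by
  rw [hermiteMonic, finsetSum_coeff, Finset.sum_eq_single i]
  · rw [coeff_C_mul, coeff_X_pow, Nat.add_sub_cancel, if_pos rfl, mul_one, hermiteMonicCoeff]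
  · intro j hj hji
    rw [Finset.mem_range] at hj
    rw [coeff_C_mul, coeff_X_pow, if_neg (by omega), mul_zero]
  · intro hi
    exact absurd (Finset.mem_range.mpr (by omega)) hi

lemma coeff_hermiteMonic_eq_zero {n k : ℕ} (h : ∀ i, n ≠ k + 2 * i) :
    (hermiteMonic n).coeff k = 0 := by
  rw [hermiteMonic, finsetSum_coeff]
  refine Finset.sum_eq_zero fun j hj => ?_
  have := h j
  rw [Finset.mem_range] at hj
  rw [coeff_C_mul, coeff_X_pow, if_neg (by omega), mul_zero]

lemma coeff_hermiteMonic_self (n : ℕ) : (hermiteMonic n).coeff n = 1 := by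
  simpa [hermiteMonicCoeff, factorial_ne_zero] using coeff_hermiteMonic_add_two_mul n 0

lemma hermiteMonic_add_two (n : ℕ) :
    hermiteMonic (n + 2) = X * hermiteMonic (n + 1) - C (((n : ℝ) + 1) / 2) * hermiteMonic n := by
  ext k
  rw [coeff_sub, coeff_C_mul]
  by_cases h : ∃ i, n + 2 = k + 2 * i
  · obtain ⟨_ | i, hi⟩ := h
    · obtain rfl : k = n + 2 := hi.symm
      rw [coeff_X_mul, coeff_hermiteMonic_eq_zero (n := n) (by omega), coeff_hermiteMonic_self,
        coeff_hermiteMonic_self, mul_zero, sub_zero]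
    · obtain rfl : n = k + 2 * i := by omega
      rw [show k + 2 * i + 2 = k + 2 * (i + 1) by ring, coeff_hermiteMonic_add_two_mul,
        coeff_hermiteMonic_add_two_mul]
      rcases k with _ | k
      · rw [coeff_X_mul_zero, hermiteMonicCoeff_zero_succ]
        push_cast
        ring
      · rw [coeff_X_mul, show k + 1 + 2 * i + 1 = k + 2 * (i + 1) by ring,
          coeff_hermiteMonic_add_two_mul, hermiteMonicCoeff_succ_succ]
        push_cast
        ring
  · push Not at h
    rw [coeff_hermiteMonic_eq_zero h, coeff_hermiteMonic_eq_zero (n := n) fun i => by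
      have := h (i + 1); omega]
    rcases k with _ | k
    · simp
    · rw [coeff_X_mul, coeff_hermiteMonic_eq_zero fun i => by have := h i; omega]
      simp

-- At `n = 0` the truncated index `n - 1` is harmless: its coefficient `n / 2` vanishes.
lemma hermiteMonic_succ (n : ℕ) :
    hermiteMonic (n + 1) = X * hermiteMonic n - C ((n : ℝ) / 2) * hermiteMonic (n - 1) := by
  rcases n with _ | n
  · simp [hermiteMonic]
  · rw [hermiteMonic_add_two, Nat.add_sub_cancel]
    push_cast
    rfl

lemma add_mul_hhat {b x : ℝ} (n : ℕ) (hx : x + b ≠ 0) :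
    (x + b) * hhat b n x = (x + b) * (b ^ 2 - 2 * n) * (hermiteMonic n).eval x
      - (b * (hermiteMonic n).eval x + n * (hermiteMonic (n - 1)).eval x) := by
  rw [hhat, mul_sub, mul_div_cancel₀ _ hx, mul_assoc]

lemma hhat_degenerate {b x : ℝ} {n : ℕ} (hb : b ^ 2 = 2 * n) (hx : x + b ≠ 0) :
    b * hhat b n x + n * hhat b (n - 1) x = 0 := by
  rcases n with _ | n
  · simp_all
  · have hrec := congrArg (eval x) (hermiteMonic_succ n)
    simp only [eval_sub, eval_mul, eval_X, eval_C] at hrec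
    refine mul_left_cancel₀ hx ?_
    rw [mul_zero, mul_add, mul_left_comm, mul_left_comm (x + b) (n + 1 : ℕ), add_mul_hhat _ hx,
      add_mul_hhat _ hx, Nat.add_sub_cancel]
    push_cast at hb ⊢
    linear_combination (b * (x + b) * (hermiteMonic (n + 1)).eval x - (hermiteMonic (n + 1)).eval x
      + (n + 1) * (x + b) * (hermiteMonic n).eval x) * hb - 2 * (n + 1) * hrec

theorem quasi_poly_degeneration_general (j : ℕ) (x : ℝ)
    (hx : x ≠ -Real.sqrt (2 * j)) :
    Real.sqrt (2 * j) * hhat (Real.sqrt (2 * j)) j x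
      + j * hhat (Real.sqrt (2 * j)) (j - 1) x = 0 :=
  hhat_degenerate (Real.sq_sqrt (by positivity)) fun h => hx (eq_neg_of_add_eq_zero_left h)

theorem quasi_poly_degeneration (j : ℕ) (hj : 1 ≤ j) (x : ℝ)
    (hx : x ≠ -Real.sqrt (2 * j)) :
    Real.sqrt (2 * j) * hhat (Real.sqrt (2 * j)) j x
      + j * hhat (Real.sqrt (2 * j)) (j - 1) x = 0 :=
  quasi_poly_degeneration_general j x hx
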